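/- arXiv:0910.5630 — 2 statements merged into one kernel-verified Lean document; each statement's English description precedes it below -/
import Mathlib

section
/- Let r ≥ 1 and m ≥ 1 be integers, let V be a complex vector space of dimension rm, and let w ∈ ⋀^r V. Then T_w = N + (w^⊥)^m, where N := {(t_1,…,t_m) ∈ (⋀^r V)^m : (−1)^r t_i + t_j = 0 for all 1 ≤ i < j ≤ m}. Consequently, if m ≥ 3, then T_w = (w^⊥)^m when r is even, and T_w = Δ + (w^⊥)^m when r is odd, where Δ := {(t,…,t) : t ∈ ⋀^r V} is the diagonal subspace. -/
open Module ExteriorAlgebra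

/-- The linear map `(t_1, …, t_m) ↦ w ∧ t_j + t_i ∧ w`. -/
noncomputable def pairMap {V : Type*} [AddCommGroup V] [Module ℂ V] {r : ℕ} (m : ℕ)
    (w : ⋀[ℂ]^r V) (i j : Fin m) :
    (Fin m → (⋀[ℂ]^r V : Submodule ℂ (ExteriorAlgebra ℂ V))) →ₗ[ℂ] ExteriorAlgebra ℂ V :=
  ((LinearMap.mulLeft ℂ (w : ExteriorAlgebra ℂ V)).comp
      ((⋀[ℂ]^r V).subtype.comp (LinearMap.proj j))) +
    ((LinearMap.mulRight ℂ (w : ExteriorAlgebra ℂ V)).comp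
      ((⋀[ℂ]^r V).subtype.comp (LinearMap.proj i)))

/-- `T_w = {(t_1,…,t_m) | w ∧ t_j + t_i ∧ w = 0 for all i < j}`. -/
noncomputable def Tw {V : Type*} [AddCommGroup V] [Module ℂ V] {r : ℕ} (m : ℕ)
    (w : ⋀[ℂ]^r V) :
    Submodule ℂ (Fin m → (⋀[ℂ]^r V : Submodule ℂ (ExteriorAlgebra ℂ V))) :=
  ⨅ (i : Fin m) (j : Fin m) (_ : i < j), LinearMap.ker (pairMap m w i j)

/-- `w^⊥ = {t ∈ ⋀^r V | w ∧ t = 0 in ⋀^(2r) V}`. -/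
noncomputable def wPerp {V : Type*} [AddCommGroup V] [Module ℂ V] {r : ℕ}
    (w : ⋀[ℂ]^r V) : Submodule ℂ (⋀[ℂ]^r V : Submodule ℂ (ExteriorAlgebra ℂ V)) :=
  LinearMap.ker ((LinearMap.mulLeft ℂ (w : ExteriorAlgebra ℂ V)).comp (⋀[ℂ]^r V).subtype)

/-- `N = {(t_1,…,t_m) | (-1)^r t_i + t_j = 0 for all i < j}`. -/
noncomputable def Nsub {V : Type*} [AddCommGroup V] [Module ℂ V] (r m : ℕ) :
    Submodule ℂ (Fin m → (⋀[ℂ]^r V : Submodule ℂ (ExteriorAlgebra ℂ V))) :=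
  ⨅ (i : Fin m) (j : Fin m) (_ : i < j),
    LinearMap.ker (((-1 : ℂ) ^ r • LinearMap.proj i) + LinearMap.proj j :
      (Fin m → (⋀[ℂ]^r V : Submodule ℂ (ExteriorAlgebra ℂ V))) →ₗ[ℂ]
        (⋀[ℂ]^r V : Submodule ℂ (ExteriorAlgebra ℂ V)))

/-- The diagonal subspace `Δ = {(t,…,t)}`. -/
noncomputable def diagSub {V : Type*} [AddCommGroup V] [Module ℂ V] (r m : ℕ) :
    Submodule ℂ (Fin m → (⋀[ℂ]^r V : Submodule ℂ (ExteriorAlgebra ℂ V))) :=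
  LinearMap.range (LinearMap.pi (fun _ : Fin m =>
    (LinearMap.id : (⋀[ℂ]^r V : Submodule ℂ (ExteriorAlgebra ℂ V)) →ₗ[ℂ]
      (⋀[ℂ]^r V : Submodule ℂ (ExteriorAlgebra ℂ V)))))

/-!
Since `r * r ≡ r (mod 2)`, graded commutativity gives `t ∧ w = ε • (w ∧ t)` with `ε = (-1)^r`, so
`T_w` consists of the tuples with `ε t_i + t_j ∈ w^⊥` for all `i < j`. For any submodule `P` in place
of `w^⊥` the decomposition is linear algebra: the tuple `n = (t_1, -ε t_1, …, -ε t_1)` lies in `N`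
and `t - n ∈ P^m`, except when `ε = 1 ≠ -1` and `m ≥ 3`. In that case `t_i + t_j ∈ P` for all
`i ≠ j`, so `2 t_i ∈ P` for every `i`, and the space is `P^m` (and `N = 0`). For `ε = -1`, `N` is
the diagonal.
-/

section SignedPairs

variable {K M : Type*} [Field K] [AddCommGroup M] [Module K M]

def signedPairSpace (ε : K) (P : Submodule K M) (m : ℕ) : Submodule K (Fin m → M) :=
  ⨅ (i : Fin m) (j : Fin m) (_ : i < j), P.comap (ε • LinearMap.proj i + LinearMap.proj j)

variable {ε : K} {P : Submodule K M} {m : ℕ}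

theorem mem_signedPairSpace {t : Fin m → M} :
    t ∈ signedPairSpace ε P m ↔ ∀ i j, i < j → ε • t i + t j ∈ P := by
  simp [signedPairSpace]

theorem signedPairSpace_mono {Q : Submodule K M} (hPQ : P ≤ Q) :
    signedPairSpace ε P m ≤ signedPairSpace ε Q m := by
  simp only [mem_signedPairSpace, SetLike.le_def]
  exact fun t ht i j hij => hPQ (ht i j hij)

theorem pi_le_signedPairSpace : Submodule.pi Set.univ (fun _ => P) ≤ signedPairSpace ε P m := by
  intro t ht
  rw [mem_signedPairSpace]
  exact fun i j _ => P.add_mem (P.smul_mem ε (ht i trivial)) (ht j trivial)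

theorem signedPairSpace_one_eq_pi (h2 : (2 : K) ≠ 0) (hm : 3 ≤ m) :
    signedPairSpace 1 P m = Submodule.pi Set.univ (fun _ => P) := by
  refine le_antisymm (fun t ht => ?_) pi_le_signedPairSpace
  simp only [mem_signedPairSpace, one_smul] at ht
  have hsymm : ∀ i j, i ≠ j → t i + t j ∈ P := fun i j hij =>
    hij.lt_or_gt.elim (ht i j) fun hji => add_comm (t j) (t i) ▸ ht j i hji
  obtain ⟨a, b, c, hab, hac, hbc⟩ := Fintype.two_lt_card_iff.mp (by rwa [Fintype.card_fin])
  have ha : t a ∈ P := by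
    rw [← P.smul_mem_iff h2, two_smul]
    convert P.sub_mem (P.add_mem (hsymm a b hab) (hsymm a c hac)) (hsymm b c hbc) using 1
    abel
  intro i _
  by_cases hia : i = a
  · exact hia ▸ ha
  · simpa using P.sub_mem (hsymm i a hia) ha

theorem signedPairSpace_le_sup (h : m ≤ 2 ∨ ε = -1) :
    signedPairSpace ε P m ≤ signedPairSpace ε ⊥ m ⊔ Submodule.pi Set.univ (fun _ => P) := by
  intro t ht
  rw [mem_signedPairSpace] at ht
  cases m with
  | zero => exact Submodule.mem_sup_left (by simp [mem_signedPairSpace])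
  | succ k =>
    set n : Fin (k + 1) → M := Fin.cons (t 0) fun _ => -(ε • t 0)
    have hn : n ∈ signedPairSpace ε ⊥ (k + 1) := by
      rw [mem_signedPairSpace]
      intro i j hij
      induction j using Fin.cases with
      | zero => exact absurd hij (Fin.not_lt_zero i)
      | succ j =>
        induction i using Fin.cases with
        | zero => simp [n]
        | succ i =>
          have hε : ε = -1 := h.resolve_left (by have := Fin.succ_lt_succ_iff.mp hij; omega)
          simp [n, hε]
    have htn : t - n ∈ Submodule.pi Set.univ (fun _ => P) := by
      intro j _
      induction j using Fin.cases with
      | zero => simp [n]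
      | succ j => simpa [n, add_comm] using ht 0 j.succ (Fin.succ_pos j)
    simpa using Submodule.add_mem_sup hn htn

theorem signedPairSpace_eq_sup (hε : ε = 1 ∨ ε = -1) :
    signedPairSpace ε P m = signedPairSpace ε ⊥ m ⊔ Submodule.pi Set.univ (fun _ => P) := by
  refine le_antisymm ?_ (sup_le (signedPairSpace_mono bot_le) pi_le_signedPairSpace)
  by_cases h : m ≤ 2 ∨ ε = -1
  · exact signedPairSpace_le_sup h
  obtain ⟨hm, hε_ne⟩ := not_or.mp h
  obtain rfl : ε = 1 := hε.resolve_right hε_ne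
  -- in characteristic 2 the case `ε = 1` is the case `ε = -1`
  have h2 : (2 : K) ≠ 0 := fun h2 => hε_ne (by linear_combination h2)
  rw [signedPairSpace_one_eq_pi h2 (by omega)]
  exact le_sup_right

theorem signedPairSpace_neg_one_bot :
    signedPairSpace (-1) ⊥ m =
      LinearMap.range (LinearMap.pi fun _ : Fin m => (LinearMap.id : M →ₗ[K] M)) := by
  refine le_antisymm (fun t ht => ?_) ?_
  · rw [mem_signedPairSpace] at ht
    cases m with
    | zero => exact ⟨0, Subsingleton.elim _ _⟩
    | succ k =>
      refine ⟨t 0, funext fun j => ?_⟩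
      induction j using Fin.cases with
      | zero => rfl
      | succ j => simpa [neg_add_eq_zero] using ht 0 j.succ (Fin.succ_pos j)
  · rintro _ ⟨x, rfl⟩
    simp [mem_signedPairSpace]

end SignedPairs

theorem neg_one_pow_mul_self {R : Type*} [Monoid R] [HasDistribNeg R] (n : ℕ) :
    (-1 : R) ^ (n * n) = (-1) ^ n := by
  rcases neg_one_pow_eq_or R n with h | h <;> simp [pow_mul, h]

namespace ExteriorAlgebra

variable {R M : Type*} [CommRing R] [AddCommGroup M] [Module R M]

theorem ι_mul_comm_of_mem_exteriorPower {p : ℕ} {x : ExteriorAlgebra R M}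
    (hx : x ∈ ⋀[R]^p M) (v : M) : ι R v * x = (-1 : R) ^ p • (x * ι R v) := by
  induction hx using Submodule.pow_induction_on_left' with
  | algebraMap a => simp [Algebra.commutes]
  | add x y p _ _ hx hy => simp [mul_add, add_mul, hx, hy, smul_add]
  | mem_mul u hu p x _ hx =>
    obtain ⟨u, rfl⟩ := hu
    have hvu : ι R v * ι R u = -(ι R u * ι R v) :=
      eq_neg_of_add_eq_zero_right (ι_add_mul_swap u v)
    rw [← mul_assoc, hvu, neg_mul, mul_assoc, hx, mul_smul_comm, ← neg_smul, pow_succ,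
      mul_neg_one, mul_assoc]

theorem mul_comm_of_mem_exteriorPower {p q : ℕ} {x y : ExteriorAlgebra R M}
    (hx : x ∈ ⋀[R]^p M) (hy : y ∈ ⋀[R]^q M) : y * x = (-1 : R) ^ (p * q) • (x * y) := by
  induction hy using Submodule.pow_induction_on_left' with
  | algebraMap a => simp [Algebra.commutes]
  | add y z q _ _ hy hz => simp [mul_add, add_mul, hy, hz, smul_add]
  | mem_mul u hu q y _ hy =>
    obtain ⟨u, rfl⟩ := hu
    rw [mul_assoc, hy, mul_smul_comm, ← mul_assoc, ι_mul_comm_of_mem_exteriorPower hx u,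
      smul_mul_assoc, smul_smul, ← mul_assoc, ← pow_add, Nat.mul_succ]

end ExteriorAlgebra

section Tw

variable {V : Type*} [AddCommGroup V] [Module ℂ V] {r m : ℕ}

theorem mem_ker_pairMap_iff (w : ⋀[ℂ]^r V) (i j : Fin m)
    (t : Fin m → (⋀[ℂ]^r V : Submodule ℂ (ExteriorAlgebra ℂ V))) :
    t ∈ LinearMap.ker (pairMap m w i j) ↔ (-1 : ℂ) ^ r • t i + t j ∈ wPerp w := by
  have hcomm :
      (t i : ExteriorAlgebra ℂ V) * w = (-1 : ℂ) ^ r • ((w : ExteriorAlgebra ℂ V) * t i) := by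
    rw [mul_comm_of_mem_exteriorPower w.2 (t i).2, neg_one_pow_mul_self]
  simp [pairMap, wPerp, hcomm, mul_add, add_comm]

theorem Tw_eq_signedPairSpace (w : ⋀[ℂ]^r V) :
    Tw m w = signedPairSpace ((-1 : ℂ) ^ r) (wPerp w) m := by
  ext t
  simp only [Tw, Submodule.mem_iInf, mem_ker_pairMap_iff, mem_signedPairSpace]

theorem Nsub_eq_signedPairSpace : Nsub (V := V) r m = signedPairSpace ((-1 : ℂ) ^ r) ⊥ m := rfl

end Tw

theorem Tw_eq_Nsub_add_wPerp_pi_general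
    {V : Type*} [AddCommGroup V] [Module ℂ V]
    {r m : ℕ}
    (w : ⋀[ℂ]^r V) :
    Tw m w = Nsub r m + Submodule.pi Set.univ (fun _ : Fin m => wPerp w) ∧
      (3 ≤ m →
        (Even r → Tw m w = Submodule.pi Set.univ (fun _ : Fin m => wPerp w)) ∧
        (Odd r → Tw m w = diagSub r m +
          Submodule.pi Set.univ (fun _ : Fin m => wPerp w))) := by
  have hsum : Tw m w = Nsub r m + Submodule.pi Set.univ (fun _ : Fin m => wPerp w) := by
    rw [Tw_eq_signedPairSpace, signedPairSpace_eq_sup (neg_one_pow_eq_or ℂ r),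
      Submodule.add_eq_sup, Nsub_eq_signedPairSpace]
  refine ⟨hsum, fun hm => ⟨fun hr => ?_, fun hr => ?_⟩⟩
  · rw [Tw_eq_signedPairSpace, hr.neg_one_pow, signedPairSpace_one_eq_pi two_ne_zero hm]
  · rw [hsum, Nsub_eq_signedPairSpace, hr.neg_one_pow, signedPairSpace_neg_one_bot]
    rfl

theorem Tw_eq_Nsub_add_wPerp_pi
    {V : Type*} [AddCommGroup V] [Module ℂ V] [FiniteDimensional ℂ V]
    {r m : ℕ} (hr : 1 ≤ r) (hm : 1 ≤ m) (hV : finrank ℂ V = r * m)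
    (w : ⋀[ℂ]^r V) :
    Tw m w = Nsub r m + Submodule.pi Set.univ (fun _ : Fin m => wPerp w) ∧
      (3 ≤ m →
        (Even r → Tw m w = Submodule.pi Set.univ (fun _ : Fin m => wPerp w)) ∧
        (Odd r → Tw m w = diagSub r m +
          Submodule.pi Set.univ (fun _ : Fin m => wPerp w))) :=
  Tw_eq_Nsub_add_wPerp_pi_general w
end

section
/- Let r ≥ 1, m ≥ 1 be integers, let V be a complex vector space of dimension rm, let (w_1,…,w_m) ∈ (⋀^r V)^m, and let 1 ≤ k ≤ m. Then the following are equivalent: (a) for every i with 0 ≤ i ≤ k−1 and every (t_1,…,t_m) ∈ (⋀^r V)^m one has Σ_{S ⊆ M, |S| = i} sgn(σ_S) · w_{M∖S} ∧ t_S = 0 in ⋀^{rm} V; (b) w_S = 0 for every S ⊆ M with |S| = m−k+1. -/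
open Module ExteriorAlgebra

/-- The permutation `σ_S` of `Fin m` listing first the complement of `S` in increasing
order, then the elements of `S` in increasing order. -/
def sigmaPerm {m : ℕ} (S : Finset (Fin m)) : Equiv.Perm (Fin m) :=
  (finCongr (by simp [Finset.card_compl_add_card])).symm.trans <|
    finSumFinEquiv.symm.trans <|
      (Equiv.sumCongr (Sᶜ.orderIsoOfFin rfl).toEquiv (S.orderIsoOfFin rfl).toEquiv).trans <|
        (Equiv.sumComm _ _).trans <|
          (Equiv.sumCongr (Equiv.refl _)
              (Equiv.subtypeEquivRight fun _ => Finset.mem_compl)).trans <|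
            Equiv.sumCompl (· ∈ S)

/-- The ordered wedge product `w_S = w_{s_1} ∧ ⋯ ∧ w_{s_k}` for `S = {s_1 < ⋯ < s_k}`,
with `w_∅ = 1`. -/
noncomputable def wedgeFinset {m : ℕ} {V : Type*} [AddCommGroup V] [Module ℂ V]
    (w : Fin m → ExteriorAlgebra ℂ V) (S : Finset (Fin m)) : ExteriorAlgebra ℂ V :=
  ((S.sort (· ≤ ·)).map w).prod

/-- The `i`-th polar expression `∑_{|S| = i} sgn(σ_S) • w_{M∖S} ∧ t_S`. -/
noncomputable def polarSum {m : ℕ} {V : Type*} [AddCommGroup V] [Module ℂ V] {r : ℕ}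
    (w t : Fin m → (⋀[ℂ]^r V : Submodule ℂ (ExteriorAlgebra ℂ V))) (i : ℕ) :
    ExteriorAlgebra ℂ V :=
  ∑ S ∈ Finset.powersetCard i (Finset.univ : Finset (Fin m)),
    (Equiv.Perm.sign (sigmaPerm S) : ℤ) •
      (wedgeFinset (fun a => (w a : ExteriorAlgebra ℂ V)) Sᶜ *
        wedgeFinset (fun a => (t a : ExteriorAlgebra ℂ V)) S)

/-!
For `|S| = m - k + 1`, a family `t` supported on `M ∖ S` collapses the `(k - 1)`-st polar sum
to `± w_S ∧ t_{M∖S}`. The products `t_{M∖S}` span `⋀^{r(k-1)} V`, and since `rm = dim V` the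
wedge pairing `⋀^{r(m-k+1)} V × ⋀^{r(k-1)} V → ⋀^{rm} V` is nondegenerate, so `w_S = 0`.
Conversely every term of a polar sum of order `i < k` contains a factor `w_T` with
`|T| ≥ m - k + 1`, and `w_T` is a right multiple of `w_S`, `S` its last `m - k + 1` elements.
-/

open Set.powersetCard in
theorem ExteriorAlgebra.eq_zero_of_mul_exteriorPower_eq_zero {R M I : Type*} [CommRing R]
    [AddCommGroup M] [Module R M] [LinearOrder I] [Fintype I] (b : Basis I R M) {d e : ℕ}
    (hde : e + d = Fintype.card I) {y : ExteriorAlgebra R M} (hy : y ∈ ⋀[R]^d M)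
    (h : ∀ x ∈ ⋀[R]^e M, y * x = 0) : y = 0 := by
  set c := (b.exteriorPower d).repr ⟨y, hy⟩
  have hsum : y = ∑ t, c t • ιMulti_family R d b t := by
    conv_lhs => rw [← Subtype.coe_mk y hy, ← (b.exteriorPower d).sum_repr ⟨y, hy⟩]
    simp [c]
  suffices c = 0 by simpa [this] using hsum
  ext s
  -- Pairing with the complementary basis vector isolates the coefficient of `s`.
  have hdisj : Disjoint s.val (compl hde s).val := disjoint_compl_right
  have hpair : y * ιMulti_family R e b (compl hde s) =
      c s • (permOfDisjoint hdisj).sign • b.ExteriorAlgebra (disjUnion hdisj) := by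
    rw [hsum, Finset.sum_mul, Finset.sum_eq_single s]
    · rw [smul_mul_assoc, ιMulti_family_mul_of_disjoint, basis_apply_powersetCard]
    · intro t _ hts
      rw [smul_mul_assoc, ιMulti_family_mul_of_not_disjoint, smul_zero]
      rw [coe_compl, disjoint_compl_right_iff]
      exact fun hts' => hts (eq_iff_subset.mpr hts')
    · simp
  have hzero := congr_arg (fun z => b.ExteriorAlgebra.repr z (disjUnion hdisj).val)
    ((h _ (ExteriorAlgebra.ιMulti_range R e ⟨_, rfl⟩)).symm.trans hpair)
  simpa [smul_comm (c s), eq_comm (a := (0 : R)), smul_eq_zero_iff_eq] using hzero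

section wedgeFinset

variable {V : Type*} [AddCommGroup V] [Module ℂ V] {m : ℕ}

theorem wedgeFinset_insert_of_lt (w : Fin m → ExteriorAlgebra ℂ V) {a : Fin m}
    {S : Finset (Fin m)} (ha : ∀ x ∈ S, a < x) :
    wedgeFinset w (insert a S) = w a * wedgeFinset w S := by
  rw [wedgeFinset, Finset.sort_insert _ (fun x hx => (ha x hx).le)
    (fun haS => lt_irrefl a (ha a haS))]
  rfl

theorem wedgeFinset_eq_prod_ofFn (w : Fin m → ExteriorAlgebra ℂ V) (S : Finset (Fin m)) :
    wedgeFinset w S = (List.ofFn fun i => w (S.orderEmbOfFin rfl i)).prod := by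
  rw [wedgeFinset, ← S.listMap_orderEmbOfFin_finRange rfl, List.map_map, List.ofFn_eq_map]
  rfl

theorem wedgeFinset_eq_zero_of_mem {w : Fin m → ExteriorAlgebra ℂ V} {S : Finset (Fin m)}
    {a : Fin m} (haS : a ∈ S) (ha : w a = 0) : wedgeFinset w S = 0 :=
  List.prod_eq_zero (List.mem_map.mpr ⟨a, (Finset.mem_sort _).mpr haS, ha⟩)

theorem wedgeFinset_mem_exteriorPower {r : ℕ} {w : Fin m → ExteriorAlgebra ℂ V}
    (hw : ∀ a, w a ∈ ⋀[ℂ]^r V) (S : Finset (Fin m)) :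
    wedgeFinset w S ∈ ⋀[ℂ]^(r * S.card) V := by
  have := SetLike.list_prod_map_mem_graded (S.sort (· ≤ ·)) (fun _ => r) w fun a _ => hw a
  simpa [mul_comm, wedgeFinset] using this

theorem wedgeFinset_eq_zero_of_card_le {w : Fin m → ExteriorAlgebra ℂ V} {c : ℕ}
    (hw : ∀ S : Finset (Fin m), S.card = c → wedgeFinset w S = 0) {T : Finset (Fin m)}
    (hT : c ≤ T.card) : wedgeFinset w T = 0 := by
  induction T using Finset.induction_on_min with
  | empty => exact hw ∅ (by simpa [eq_comm] using hT)
  | insert a S haS ih =>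
    have ha : a ∉ S := fun h => lt_irrefl a (haS a h)
    rw [Finset.card_insert_of_notMem ha] at hT
    rcases hT.eq_or_lt with hc | hc
    · exact hw _ (by rw [Finset.card_insert_of_notMem ha, hc])
    · rw [wedgeFinset_insert_of_lt w haS, ih (by omega), mul_zero]

end wedgeFinset

section polarSum

variable {V : Type*} [AddCommGroup V] [Module ℂ V] {m r : ℕ}

theorem polarSum_card_eq_of_forall_notMem
    (w t : Fin m → (⋀[ℂ]^r V : Submodule ℂ (ExteriorAlgebra ℂ V))) {A : Finset (Fin m)}
    (ht : ∀ a ∉ A, t a = 0) :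
    polarSum w t A.card = (Equiv.Perm.sign (sigmaPerm A) : ℤ) •
      (wedgeFinset (fun a => (w a : ExteriorAlgebra ℂ V)) Aᶜ *
        wedgeFinset (fun a => (t a : ExteriorAlgebra ℂ V)) A) := by
  refine Finset.sum_eq_single_of_mem A (Finset.mem_powersetCard_univ.mpr rfl) fun B hB hBA => ?_
  have hBA' : ¬B ⊆ A := fun hsub =>
    hBA (Finset.eq_of_subset_of_card_le hsub (Finset.mem_powersetCard_univ.mp hB).ge)
  obtain ⟨a, haB, haA⟩ := Finset.not_subset.mp hBA'
  rw [wedgeFinset_eq_zero_of_mem haB (by simp [ht a haA]), mul_zero, smul_zero]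

theorem wedgeFinset_compl_mul_eq_zero_of_polarSum_eq_zero
    (w : Fin m → (⋀[ℂ]^r V : Submodule ℂ (ExteriorAlgebra ℂ V))) {A : Finset (Fin m)}
    (hw : ∀ t, polarSum w t A.card = 0) :
    ∀ x ∈ ⋀[ℂ]^(r * A.card) V,
      wedgeFinset (fun a => (w a : ExteriorAlgebra ℂ V)) Aᶜ * x = 0 := by
  intro x hx
  -- `⋀^(r|A|) = (⋀^r)^|A|` is spanned by products of `|A|` elements of `⋀^r`, each of which is
  -- `t_A` for a `t` supported on `A`.
  rw [ExteriorAlgebra.exteriorPower, pow_mul, Submodule.pow_eq_span_pow_set] at hx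
  refine Submodule.span_le (p := LinearMap.ker (LinearMap.mulLeft ℂ _)) |>.mpr ?_ hx
  intro _ hy
  obtain ⟨f, rfl⟩ := Set.mem_pow.mp hy
  let e := A.orderEmbOfFin rfl
  let t := Function.extend e (fun i => (⟨f i, (f i).2⟩ : ⋀[ℂ]^r V)) 0
  have ht : ∀ a ∉ A, t a = 0 := fun a ha =>
    Function.extend_apply' _ _ _ fun ⟨i, hi⟩ => ha (hi ▸ A.orderEmbOfFin_mem rfl i)
  have hwedge : wedgeFinset (fun a => (t a : ExteriorAlgebra ℂ V)) A =
      (List.ofFn fun i => (f i : ExteriorAlgebra ℂ V)).prod := by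
    rw [wedgeFinset_eq_prod_ofFn]
    congr with i
    simp only [t, e, (A.orderEmbOfFin rfl).injective.extend_apply]
  have := hw t
  rwa [polarSum_card_eq_of_forall_notMem w t ht, hwedge, ← Units.smul_def,
    smul_eq_zero_iff_eq] at this

end polarSum

theorem polarSum_vanishing_iff_wedge_vanishing
    {V : Type*} [AddCommGroup V] [Module ℂ V] {r m k : ℕ}
    (hr : 1 ≤ r) (hm : 1 ≤ m) (hV : finrank ℂ V = r * m)
    (w : Fin m → (⋀[ℂ]^r V : Submodule ℂ (ExteriorAlgebra ℂ V)))
    (hk1 : 1 ≤ k) (hkm : k ≤ m) :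
    (∀ i ≤ k - 1, ∀ t : Fin m → (⋀[ℂ]^r V : Submodule ℂ (ExteriorAlgebra ℂ V)),
        polarSum w t i = 0) ↔
      ∀ S : Finset (Fin m), S.card = m - k + 1 →
        wedgeFinset (fun a => (w a : ExteriorAlgebra ℂ V)) S = 0 := by
  constructor
  · intro hpolar S hS
    have hcompl : Sᶜ.card = k - 1 := by rw [Finset.card_compl, Fintype.card_fin]; omega
    have : Module.Finite ℂ V := Module.finite_of_finrank_pos (hV ▸ Nat.mul_pos hr hm)
    refine ExteriorAlgebra.eq_zero_of_mul_exteriorPower_eq_zero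
      (Module.finBasisOfFinrankEq ℂ V hV) (d := r * S.card) (e := r * Sᶜ.card) ?_
      (wedgeFinset_mem_exteriorPower (fun a => (w a).2) S) ?_
    · rw [← mul_add, Fintype.card_fin, Finset.card_compl_add_card, Fintype.card_fin]
    · have := wedgeFinset_compl_mul_eq_zero_of_polarSum_eq_zero w (A := Sᶜ)
        fun t => hcompl ▸ hpolar (k - 1) le_rfl t
      rwa [compl_compl] at this
  · intro hwedge i hi t
    refine Finset.sum_eq_zero fun S hS => ?_
    have hcard : m - k + 1 ≤ Sᶜ.card := by
      rw [Finset.card_compl, Fintype.card_fin, Finset.mem_powersetCard_univ.mp hS]; omega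
    rw [wedgeFinset_eq_zero_of_card_le hwedge hcard, zero_mul, smul_zero]
end
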